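/- arXiv:2110.01118 — 3 statements merged into one kernel-verified Lean document; each statement's English description precedes it below -/
import Mathlib

section
/- Let F be a D₂-saturated family of subsets of [n] and let S be a nonempty minimal element of F. Then for every i ∈ S there exists B ∈ F with S ∖ {i} ⊆ B and i ∉ B. -/
/-- Four sets form an induced copy of the diamond `D₂`:
`W ⊊ X ⊊ Z`, `W ⊊ Y ⊊ Z`, with `X` and `Y` incomparable. -/
def IsDiamond {α : Type*} (W X Y Z : Finset α) : Prop :=
  W ⊂ X ∧ X ⊂ Z ∧ W ⊂ Y ∧ Y ⊂ Z ∧ ¬ X ⊆ Y ∧ ¬ Y ⊆ X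

/-- A family contains an induced copy of the diamond. -/
def ContainsDiamond {α : Type*} (F : Finset (Finset α)) : Prop :=
  ∃ W ∈ F, ∃ X ∈ F, ∃ Y ∈ F, ∃ Z ∈ F, IsDiamond W X Y Z

/-- A family is diamond-free. -/
def DiamondFree {α : Type*} (F : Finset (Finset α)) : Prop :=
  ¬ ContainsDiamond F

/-- A family of subsets of `[n]` is `D₂`-saturated. -/
def Saturated (n : ℕ) (F : Finset (Finset (Fin n))) : Prop :=
  DiamondFree F ∧ ∀ S : Finset (Fin n), S ∉ F → ContainsDiamond (insert S F)

/-- `S` is a minimal element of the family `F`. -/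
def MinimalIn {α : Type*} (F : Finset (Finset α)) (S : Finset α) : Prop :=
  S ∈ F ∧ ∀ T ∈ F, ¬ T ⊂ S

/-- `S` is a maximal element of the family `F`. -/
def MaximalIn {α : Type*} (F : Finset (Finset α)) (S : Finset α) : Prop :=
  S ∈ F ∧ ∀ T ∈ F, ¬ S ⊂ T

/-- `(B, A)` is an `i`-configuration for `F`, `S`, `i`:
`S ⊊ B ⊊ A`, `S ∪ {i} ⊊ A`, and `B` is incomparable with `S ∪ {i}`. -/
def IConfig {n : ℕ} (F : Finset (Finset (Fin n))) (S : Finset (Fin n)) (i : Fin n)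
    (B A : Finset (Fin n)) : Prop :=
  B ∈ F ∧ A ∈ F ∧ S ⊂ B ∧ B ⊂ A ∧ insert i S ⊂ A ∧
    ¬ B ⊆ insert i S ∧ ¬ insert i S ⊆ B

/-- An `i`-configuration `(B, A)` is extremal: `B` has maximal cardinality among all
`i`-configurations, and `A` has minimal cardinality among `i`-configurations of the
form `(B, A')`. -/
def ExtremalIConfig {n : ℕ} (F : Finset (Finset (Fin n))) (S : Finset (Fin n)) (i : Fin n)
    (B A : Finset (Fin n)) : Prop :=
  IConfig F S i B A ∧
    (∀ B' A' : Finset (Fin n), IConfig F S i B' A' → B'.card ≤ B.card) ∧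
    (∀ A' : Finset (Fin n), IConfig F S i B A' → A.card ≤ A'.card)

/-- `(X, Y, N)` is an `i`-witness for `B`: `X, Y, N ∈ F`, `N ⊊ B ∪ {i} ⊊ X`,
`N ⊊ Y ⊊ X`, and `Y` is incomparable with `B ∪ {i}`. -/
def IWitness {n : ℕ} (F : Finset (Finset (Fin n))) (B : Finset (Fin n)) (i : Fin n)
    (X Y N : Finset (Fin n)) : Prop :=
  X ∈ F ∧ Y ∈ F ∧ N ∈ F ∧ N ⊂ insert i B ∧ insert i B ⊂ X ∧ N ⊂ Y ∧ Y ⊂ X ∧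
    ¬ Y ⊆ insert i B ∧ ¬ insert i B ⊆ Y

/-!
Removing `i` from the minimal set `S` gives a set `S \ {i}` outside `F`, so by saturation it
completes a diamond. Nothing in `F` lies strictly below `S \ {i}`, which forces `S \ {i}` to be
the bottom of that diamond. If both middle sets contained `i`, they would contain `S`, and `S`
could replace the bottom, giving a diamond inside `F`. So one of them is the required `B`.
-/

section Diamond

variable {α : Type*}

theorem IsDiamond.of_subset_of_subset {W W' X Y Z : Finset α} (h : IsDiamond W X Y Z)
    (hX : W' ⊆ X) (hY : W' ⊆ Y) : IsDiamond W' X Y Z := by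
  obtain ⟨-, hXZ, -, hYZ, hXY, hYX⟩ := h
  refine ⟨hX.ssubset_of_ne ?_, hXZ, hY.ssubset_of_ne ?_, hYZ, hXY, hYX⟩
  · rintro rfl
    exact hXY hY
  · rintro rfl
    exact hYX hX

theorem exists_isDiamond_bottom_of_containsDiamond_insert [DecidableEq α] {F : Finset (Finset α)}
    {T : Finset α} (hF : DiamondFree F) (hT : ∀ U ∈ F, ¬ U ⊂ T)
    (h : ContainsDiamond (insert T F)) :
    ∃ X ∈ F, ∃ Y ∈ F, ∃ Z ∈ F, IsDiamond T X Y Z := by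
  obtain ⟨W, hW, X, hX, Y, hY, Z, hZ, hd⟩ := h
  have hWX := hd.1
  have hXZ := hd.2.1
  have hWY := hd.2.2.1
  have mem_of_ne {V : Finset α} (hV : V ∈ insert T F) (hne : V ≠ T) : V ∈ F :=
    (Finset.mem_insert.1 hV).resolve_left hne
  rcases Finset.mem_insert.1 hW with rfl | hWF
  · exact ⟨X, mem_of_ne hX hWX.ne', Y, mem_of_ne hY hWY.ne', Z,
      mem_of_ne hZ (hWX.trans hXZ).ne', hd⟩
  · exfalso
    have hXF : X ∈ F := mem_of_ne hX fun hXT => hT W hWF (hXT ▸ hWX)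
    have hYF : Y ∈ F := mem_of_ne hY fun hYT => hT W hWF (hYT ▸ hWY)
    have hZF : Z ∈ F := mem_of_ne hZ fun hZT => hT W hWF (hZT ▸ hWX.trans hXZ)
    exact hF ⟨W, hWF, X, hXF, Y, hYF, Z, hZF, hd⟩

end Diamond

theorem statement_2_general {n : ℕ} (F : Finset (Finset (Fin n))) (S : Finset (Fin n))
    (hF : Saturated n F) (hS : MinimalIn F S) :
    ∀ i ∈ S, ∃ B ∈ F, S \ {i} ⊆ B ∧ i ∉ B := by
  intro i hi
  have hsub : S \ {i} ⊂ S :=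
    Finset.sdiff_ssubset (Finset.singleton_subset_iff.2 hi) (Finset.singleton_nonempty i)
  have hbelow : ∀ U ∈ F, ¬ U ⊂ S \ {i} := fun U hU hU' => hS.2 U hU (hU'.trans hsub)
  obtain ⟨X, hX, Y, hY, Z, hZ, hd⟩ := exists_isDiamond_bottom_of_containsDiamond_insert hF.1
    hbelow (hF.2 _ fun h => hS.2 _ h hsub)
  by_contra! hmem
  have hS_subset {V : Finset (Fin n)} (hV : V ∈ F) (hV' : S \ {i} ⊆ V) : S ⊆ V := by
    simpa [Finset.insert_eq_of_mem (hmem V hV hV')] using sdiff_le_iff.1 hV'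
  exact hF.1 ⟨S, hS.1, X, hX, Y, hY, Z, hZ,
    hd.of_subset_of_subset (hS_subset hX hd.1.subset) (hS_subset hY hd.2.2.1.subset)⟩

theorem statement_2 {n : ℕ} (F : Finset (Finset (Fin n))) (S : Finset (Fin n))
    (hF : Saturated n F) (hS : MinimalIn F S) (hne : S.Nonempty) :
    ∀ i ∈ S, ∃ B ∈ F, S \ {i} ⊆ B ∧ i ∉ B :=
  statement_2_general F S hF hS
end

section
/- Let F be a D₂-saturated family of subsets of [n], S a minimal element of F, i ∈ [n] ∖ S, and (B_i, A_i) an extremal i-configuration with B_i ∪ {i} ∉ F. Let (X, Y, N) be an i-witness. Then i ∈ N, and S and N are incomparable (neither S ⊆ N nor N ⊆ S); in particular N ≠ S. -/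
/-!
If `i ∉ N`, then `N ⊆ B_i`. Either `B_i ⊊ Y`, and then `(Y, X)` is an `i`-configuration with a
larger bottom set than `B_i`, contradicting extremality; or `B_i ⊈ Y`, and then `N, B_i, Y, X`
is a diamond in `F`. Once `i ∈ N`, the sets `N` and `S` are distinguished by `i`, and `S ⊆ N`
would make `S, B_i, N, X` a diamond in `F`.
-/

section

variable {n : ℕ} {F : Finset (Finset (Fin n))} {S B A X Y N : Finset (Fin n)} {i : Fin n}

theorem IConfig.notMem (hc : IConfig F S i B A) : i ∉ B :=
  fun hiB => hc.2.2.2.2.2.2 (Finset.insert_subset hiB hc.2.2.1.subset)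

theorem IWitness.iConfig_of_subset (hc : IConfig F S i B A) (hw : IWitness F B i X Y N)
    (hBY : B ⊆ Y) : IConfig F S i Y X := by
  obtain ⟨-, -, hSB, -, -, -, -⟩ := hc
  obtain ⟨hX, hY, -, -, hBX, -, hYX, hYB, hBY'⟩ := hw
  have hSiBi : insert i S ⊆ insert i B := Finset.insert_subset_insert i hSB.subset
  refine ⟨hY, hX, hSB.trans_subset hBY, hYX, hSiBi.trans_ssubset hBX,
    fun h => hYB (h.trans hSiBi), fun h => hBY' (Finset.insert_subset ?_ hBY)⟩
  exact h (Finset.mem_insert_self i S)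

theorem IWitness.isDiamond_of_notMem (hw : IWitness F B i X Y N) (hiN : i ∉ N)
    (hBY : ¬ B ⊆ Y) : IsDiamond N B Y X := by
  obtain ⟨-, -, -, hNB, hBX, hNY, hYX, hYB, -⟩ := hw
  have hNB' : N ⊆ B := fun x hx =>
    (Finset.mem_insert.1 (hNB.subset hx)).resolve_left (by rintro rfl; exact hiN hx)
  exact ⟨hNB'.ssubset_of_ne (by rintro rfl; exact hBY hNY.subset),
    (Finset.subset_insert i B).trans_ssubset hBX, hNY, hYX, hBY,
    fun h => hYB (h.trans (Finset.subset_insert i B))⟩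

theorem IWitness.mem_of_forall_card_le (hF : DiamondFree F) (hc : IConfig F S i B A)
    (hmax : ∀ B' A', IConfig F S i B' A' → B'.card ≤ B.card) (hw : IWitness F B i X Y N) :
    i ∈ N := by
  have ⟨hX, hY, hN, _, _, _, _, hYB, _⟩ := hw
  by_contra hiN
  by_cases hBY : B ⊆ Y
  · have hBY' : B ⊂ Y :=
      hBY.ssubset_of_ne (by rintro rfl; exact hYB (Finset.subset_insert i B))
    exact (Finset.card_lt_card hBY').not_ge (hmax Y X (hw.iConfig_of_subset hc hBY))
  · exact hF ⟨N, hN, B, hc.1, Y, hY, X, hX, hw.isDiamond_of_notMem hiN hBY⟩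

theorem IWitness.isDiamond_of_subset (hc : IConfig F S i B A) (hw : IWitness F B i X Y N)
    (hi : i ∉ S) (hiN : i ∈ N) (hSN : S ⊆ N) : IsDiamond S B N X := by
  obtain ⟨-, -, -, hNB, hBX, -, -, -, -⟩ := hw
  exact ⟨hc.2.2.1, (Finset.subset_insert i B).trans_ssubset hBX,
    hSN.ssubset_of_ne (by rintro rfl; exact hi hiN), hNB.trans hBX,
    fun h => hNB.ne (hNB.subset.antisymm (Finset.insert_subset hiN h)),
    fun h => hc.notMem (h hiN)⟩

end

theorem statement_6_general {n : ℕ} (F : Finset (Finset (Fin n))) (S : Finset (Fin n))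
    (i : Fin n) (Bi Ai X Y N : Finset (Fin n))
    (hF : Saturated n F) (hS : MinimalIn F S) (hi : i ∉ S)
    (hBi : ExtremalIConfig F S i Bi Ai)
    (hW : IWitness F Bi i X Y N) :
    i ∈ N ∧ ¬ S ⊆ N ∧ ¬ N ⊆ S := by
  obtain ⟨hc, hmax, -⟩ := hBi
  have hiN : i ∈ N := hW.mem_of_forall_card_le hF.1 hc hmax
  refine ⟨hiN, fun hSN => ?_, fun hNS => hi (hNS hiN)⟩
  exact hF.1 ⟨S, hS.1, Bi, hc.1, N, hW.2.2.1, X, hW.1, hW.isDiamond_of_subset hc hi hiN hSN⟩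

theorem statement_6 {n : ℕ} (F : Finset (Finset (Fin n))) (S : Finset (Fin n))
    (i : Fin n) (Bi Ai X Y N : Finset (Fin n))
    (hF : Saturated n F) (hS : MinimalIn F S) (hi : i ∉ S)
    (hBi : ExtremalIConfig F S i Bi Ai) (hBiF : insert i Bi ∉ F)
    (hW : IWitness F Bi i X Y N) :
    i ∈ N ∧ ¬ S ⊆ N ∧ ¬ N ⊆ S :=
  statement_6_general F S i Bi Ai X Y N hF hS hi hBi hW
end

section
/- Claim C: Let F be a D₂-saturated family of subsets of [n], S a minimal element of F, and i, j ∈ [n] ∖ S with i ≠ j. Let (B_i, A_i) and (B_j, A_j) be extremal i- and j-configurations with B_i ∪ {i} ∉ F and B_j ∪ {j} ∉ F, and let (X_i, Y_i, N_i) be an i-witness and (X_j, Y_j, N_j) a j-witness. Then it is not the case that both N_i = N_j and B_i = B_j. -/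
open Finset

theorem Finset.subset_of_subset_insert_of_subset_insert {α : Type*} [DecidableEq α]
    {s t : Finset α} {a b : α} (hab : a ≠ b) (ha : s ⊆ insert a t) (hb : s ⊆ insert b t) :
    s ⊆ t := by
  intro x hx
  rcases mem_insert.mp (ha hx) with rfl | hxt
  · exact (mem_insert.mp (hb hx)).resolve_left hab
  · exact hxt

section

variable {n : ℕ} {F : Finset (Finset (Fin n))} {S B A X Y N : Finset (Fin n)} {i : Fin n}

theorem IWitness.not_subset (hW : IWitness F B i X Y N) : ¬ Y ⊆ B := by
  obtain ⟨-, -, -, -, -, -, -, hYnB, -⟩ := hW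
  exact fun h => hYnB (h.trans (subset_insert i B))

theorem IWitness.iConfig_of_ssubset (hW : IWitness F B i X Y N) (hSB : S ⊂ B) (hBY : B ⊂ Y) :
    IConfig F S i Y X := by
  obtain ⟨hX, hY, -, -, hBX, -, hYX, -, hBnY⟩ := hW
  have hiY : i ∉ Y := fun hi => hBnY (insert_subset hi hBY.subset)
  refine ⟨hY, hX, hSB.trans hBY, hYX, ?_, ?_, fun h => hiY (h (mem_insert_self i S))⟩
  · exact lt_of_le_of_lt (insert_subset_insert i hSB.subset) hBX
  · intro h
    exact (hSB.trans hBY).not_subset ((subset_insert_iff_of_notMem hiY).mp h)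

theorem ExtremalIConfig.not_subset_of_iWitness (hBA : ExtremalIConfig F S i B A)
    (hW : IWitness F B i X Y N) : ¬ B ⊆ Y := by
  intro hBY
  have hBY' : B ⊂ Y := ⟨hBY, hW.not_subset⟩
  obtain ⟨⟨-, -, hSB, -⟩, hmax, -⟩ := hBA
  exact (card_lt_card hBY').not_ge (hmax Y X (hW.iConfig_of_ssubset hSB hBY'))

theorem IWitness.isDiamond (hW : IWitness F B i X Y N) (hNB : N ⊆ B) (hBY : ¬ B ⊆ Y) :
    IsDiamond N B Y X := by
  have hYB := hW.not_subset
  obtain ⟨-, -, -, -, hBX, hNY, hYX, -, -⟩ := hW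
  exact ⟨⟨hNB, fun hBN => hBY (hBN.trans hNY.subset)⟩, lt_of_le_of_lt (subset_insert i B) hBX,
    hNY, hYX, hBY, hYB⟩

theorem ExtremalIConfig.containsDiamond_of_iWitness (hBA : ExtremalIConfig F S i B A)
    (hW : IWitness F B i X Y N) (hNB : N ⊆ B) : ContainsDiamond F :=
  ⟨N, hW.2.2.1, B, hBA.1.1, Y, hW.2.1, X, hW.1,
    hW.isDiamond hNB (hBA.not_subset_of_iWitness hW)⟩

end

theorem statement_7_general {n : ℕ} (F : Finset (Finset (Fin n))) (S : Finset (Fin n))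
    (i j : Fin n) (Bi Ai Bj Xi Yi Ni Xj Yj Nj : Finset (Fin n))
    (hF : Saturated n F) (hij : i ≠ j)
    (hBi : ExtremalIConfig F S i Bi Ai)
    (hWi : IWitness F Bi i Xi Yi Ni) (hWj : IWitness F Bj j Xj Yj Nj) :
    ¬ (Ni = Nj ∧ Bi = Bj) := by
  rintro ⟨rfl, rfl⟩
  have hNB : Ni ⊆ Bi :=
    subset_of_subset_insert_of_subset_insert hij hWi.2.2.2.1.subset hWj.2.2.2.1.subset
  exact hF.1 (hBi.containsDiamond_of_iWitness hWi hNB)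

theorem statement_7 {n : ℕ} (F : Finset (Finset (Fin n))) (S : Finset (Fin n))
    (i j : Fin n) (Bi Ai Bj Aj Xi Yi Ni Xj Yj Nj : Finset (Fin n))
    (hF : Saturated n F) (hS : MinimalIn F S)
    (hi : i ∉ S) (hj : j ∉ S) (hij : i ≠ j)
    (hBi : ExtremalIConfig F S i Bi Ai) (hBj : ExtremalIConfig F S j Bj Aj)
    (hBiF : insert i Bi ∉ F) (hBjF : insert j Bj ∉ F)
    (hWi : IWitness F Bi i Xi Yi Ni) (hWj : IWitness F Bj j Xj Yj Nj) :
    ¬ (Ni = Nj ∧ Bi = Bj) :=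
  statement_7_general F S i j Bi Ai Bj Xi Yi Ni Xj Yj Nj hF hij hBi hWi hWj
end
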